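/- arXiv:2012.00870 — 2 statements merged into one kernel-verified Lean document; each statement's English description precedes it below -/
import Mathlib

section
/- Let f : F_q → F_q be differentially d-uniform with |Image(f)| = ⌈q/(d+1)⌉ = (q+ε)/(d+1) for some 1 ≤ ε ≤ d. Then Σ_{y ∈ Image(f)} (ω(y) − (d+1))² ≤ (d+1)(ε−1) + 1, where ω(y) denotes the number of preimages of y under f. -/
open Finset
open scoped Classical

/-- Number of preimages of `y` under `f`. -/
noncomputable def preCard {F : Type*} [Fintype F] (f : F → F) (y : F) : ℕ :=
  (Finset.univ.filter fun x => f x = y).card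

/-- `N(f)`: the number of pairs `(x,y)` with `f x = f y`. -/
noncomputable def NN {F : Type*} [Fintype F] (f : F → F) : ℕ :=
  (Finset.univ.filter fun p : F × F => f p.1 = f p.2).card

/-- `f` is differentially `d`-uniform: every equation `f (x+a) - f x = b` with `a ≠ 0`
has at most `d` solutions. -/
def DUniform {F : Type*} [Field F] [Fintype F] (f : F → F) (d : ℕ) : Prop :=
  ∀ a b : F, a ≠ 0 → (Finset.univ.filter fun x => f (x + a) - f x = b).card ≤ d

/-- `M_r(f)`: the number of elements with exactly `r` preimages under `f`. -/
noncomputable def Mcount {F : Type*} [Fintype F] (f : F → F) (r : ℕ) : ℕ :=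
  (Finset.univ.filter fun y => preCard f y = r).card

lemma sum_preCard {F : Type*} [Fintype F] (f : F → F) :
    ∑ y ∈ Finset.image f Finset.univ, preCard f y = Fintype.card F := by
  rw [← Finset.card_univ, Finset.card_eq_sum_card_image f Finset.univ]
  rfl

lemma NN_eq {F : Type*} [Fintype F] (f : F → F) :
    NN f = ∑ y ∈ Finset.image f Finset.univ, (preCard f y) ^ 2 := by
  rw [NN, Finset.card_eq_sum_card_fiberwise (f := fun p : F × F => f p.1)
    (t := Finset.image f Finset.univ) (fun p _ => Finset.mem_image_of_mem f (Finset.mem_univ _))]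
  refine Finset.sum_congr rfl fun c _ => ?_
  have : ((Finset.univ.filter fun p : F × F => f p.1 = f p.2).filter fun p => f p.1 = c)
      = (Finset.univ.filter fun x => f x = c) ×ˢ (Finset.univ.filter fun x => f x = c) := by
    ext p
    simp only [Finset.mem_filter, Finset.mem_univ, true_and, Finset.mem_product]
    constructor
    · rintro ⟨h1, h2⟩; exact ⟨h2, h2 ▸ h1 ▸ rfl⟩
    · rintro ⟨h1, h2⟩; exact ⟨h1.trans h2.symm, h1⟩
  rw [this, Finset.card_product, preCard, sq]

lemma NN_le {F : Type*} [Field F] [Fintype F] {f : F → F} {d : ℕ} (hf : DUniform f d) :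
    NN f ≤ Fintype.card F + (Fintype.card F - 1) * d := by
  rw [NN, Finset.card_eq_sum_card_fiberwise (f := fun p : F × F => p.2 - p.1)
    (t := Finset.univ) (fun p _ => Finset.mem_univ _)]
  rw [← Finset.sum_erase_add _ _ (Finset.mem_univ (0 : F))]
  have h0 : ((Finset.univ.filter fun p : F × F => f p.1 = f p.2).filter
      fun p => p.2 - p.1 = 0).card ≤ Fintype.card F := by
    rw [← Finset.card_univ]
    apply Finset.card_le_card_of_injOn (fun p => p.1) (fun p _ => Finset.mem_univ _)
    intro p hp q hq hpq
    simp only [Finset.coe_filter, Set.mem_setOf_eq, sub_eq_zero] at hp hq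
    refine Prod.ext hpq ?_
    rw [hp.2, hq.2]; exact hpq
  have ha : ∀ a ∈ Finset.univ.erase (0 : F),
      ((Finset.univ.filter fun p : F × F => f p.1 = f p.2).filter
        fun p => p.2 - p.1 = a).card ≤ d := by
    intro a haa
    have ha0 : a ≠ 0 := Finset.ne_of_mem_erase haa
    refine le_trans ?_ (hf a 0 ha0)
    apply Finset.card_le_card_of_injOn (fun p => p.1)
    · intro p hp
      simp only [Finset.mem_coe, Finset.mem_filter, Finset.mem_univ, true_and] at hp ⊢
      have : p.2 = p.1 + a := by linear_combination hp.2
      rw [← this, hp.1, sub_self]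
    · intro p hp q hq hpq
      simp only [Finset.coe_filter, Set.mem_setOf_eq] at hp hq
      have h2 : p.2 = q.2 := by linear_combination hp.2 - hq.2 + hpq
      exact Prod.ext hpq h2
  calc _ ≤ ∑ a ∈ Finset.univ.erase (0:F), d + Fintype.card F := by
        exact Nat.add_le_add (Finset.sum_le_sum ha) h0
    _ = (Fintype.card F - 1) * d + Fintype.card F := by
        rw [Finset.sum_const, smul_eq_mul, Finset.card_erase_of_mem (Finset.mem_univ _),
          Finset.card_univ]
    _ = Fintype.card F + (Fintype.card F - 1) * d := by ring

/-- if a differentially `d`-uniform `f` has minimal image size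
`⌈q/(d+1)⌉ = (q+ε)/(d+1)` with `1 ≤ ε ≤ d`, then
`Σ_{y ∈ Image f} (ω(y) − (d+1))² ≤ (d+1)(ε−1) + 1`. -/
theorem preimage_distribution_of_min_image {F : Type*} [Field F] [Fintype F] {f : F → F}
    {d ε : ℕ} (hf : DUniform f d) (hε1 : 1 ≤ ε) (hεd : ε ≤ d)
    (himg : (Finset.image f Finset.univ).card = ⌈(Fintype.card F : ℚ) / (d + 1)⌉₊)
    (himg' : (Finset.image f Finset.univ).card * (d + 1) = Fintype.card F + ε) :
    ∑ y ∈ Finset.image f Finset.univ, ((preCard f y : ℤ) - (d + 1)) ^ 2 ≤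
      ((d : ℤ) + 1) * ((ε : ℤ) - 1) + 1 := by
  set s := Finset.image f Finset.univ with hs
  have h1 : ∑ y ∈ s, (preCard f y : ℤ) = (Fintype.card F : ℤ) := by
    rw [← Nat.cast_sum, sum_preCard]
  have h2 : ∑ y ∈ s, (preCard f y : ℤ) ^ 2 = (NN f : ℤ) := by
    rw [NN_eq]; push_cast; rfl
  have hq1 : 1 ≤ Fintype.card F := Fintype.card_pos
  have h3 : (NN f : ℤ) ≤ (Fintype.card F : ℤ) + ((Fintype.card F : ℤ) - 1) * d := by
    have := NN_le hf
    have : (NN f : ℤ) ≤ ((Fintype.card F + (Fintype.card F - 1) * d : ℕ) : ℤ) := by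
      exact_mod_cast this
    calc (NN f : ℤ) ≤ _ := this
      _ = (Fintype.card F : ℤ) + ((Fintype.card F : ℤ) - 1) * d := by
          push_cast [Nat.cast_sub hq1]; ring
  have h4 : (s.card : ℤ) * ((d : ℤ) + 1) = (Fintype.card F : ℤ) + ε := by
    exact_mod_cast himg'
  have expand : ∑ y ∈ s, ((preCard f y : ℤ) - (d + 1)) ^ 2 =
      (∑ y ∈ s, (preCard f y : ℤ) ^ 2) - 2 * ((d : ℤ) + 1) * (∑ y ∈ s, (preCard f y : ℤ))
        + ((d : ℤ) + 1) ^ 2 * s.card := by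
    simp only [sub_sq, Finset.sum_add_distrib, Finset.sum_sub_distrib, ← Finset.mul_sum, ← Finset.sum_mul,
      Finset.sum_const, nsmul_eq_mul]
    ring
  rw [expand, h1, h2]
  nlinarith [h3, h4]
end

section
/- Let n = 2rm and let f : F_{2^n} → F_{2^n} be an almost-(2^r+1)-to-1 component-wise plateaued map with f(0) = 0 and 0 being the unique image element with exactly one preimage. Then f has exactly (2^r/(2^r+1))·(2^n−1) bent components and (2^n−1)/(2^r+1) components of amplitude 2r. Moreover W_f(b,0) ∈ {(−1)^m 2^{rm}, (−1)^{m+1} 2^{r(m+1)}} for every nonzero b. -/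
open Finset
open scoped Classical

/-- The Walsh transform `W_f(b,a) = Σ_x (−1)^{Tr(b f(x) + a x)}` of a map on a binary
field, where `Tr` is the absolute trace to `F_2`. -/
noncomputable def Walsh {F : Type*} [Field F] [Fintype F] [CharP F 2] (f : F → F)
    (b a : F) : ℤ :=
  letI := ZMod.algebra F 2
  ∑ x : F, if Algebra.trace (ZMod 2) F (b * f x + a * x) = 0 then 1 else -1

section Aux

/-- The additive character `x ↦ (−1)^{Tr x}`. -/
noncomputable def chr (F : Type*) [Field F] [Fintype F] [CharP F 2] (c : F) : ℤ :=
  letI := ZMod.algebra F 2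
  if Algebra.trace (ZMod 2) F c = 0 then 1 else -1

variable {F : Type*} [Field F] [Fintype F] [CharP F 2]

lemma walsh_def (f : F → F) (b a : F) :
    Walsh f b a = ∑ x : F, chr F (b * f x + a * x) := rfl

lemma chr_zero : chr F 0 = 1 := by
  letI := ZMod.algebra F 2
  simp [chr]

lemma chr_add (x y : F) : chr F (x + y) = chr F x * chr F y := by
  letI := ZMod.algebra F 2
  have key : ∀ s t : ZMod 2, (if s + t = 0 then (1:ℤ) else -1) =
      (if s = 0 then (1:ℤ) else -1) * (if t = 0 then (1:ℤ) else -1) := by decide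
  simp only [chr, map_add]
  exact key _ _

lemma trace2_nondeg : ∀ a : F, a ≠ 0 → ∃ x : F,
    letI := ZMod.algebra F 2
    Algebra.trace (ZMod 2) F (a * x) ≠ 0 := by
  letI := ZMod.algebra F 2
  haveI : Fact (Nat.Prime 2) := ⟨by norm_num⟩
  intro a ha
  have htr := (traceForm_nondegenerate (ZMod 2) F).1 a
  simp_rw [Algebra.traceForm_apply] at htr
  by_contra! hf
  exact ha (htr hf)

lemma sum_chr (c : F) :
    ∑ x : F, chr F (c * x) = if c = 0 then (Fintype.card F : ℤ) else 0 := by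
  by_cases hc : c = 0
  · simp [hc, chr_zero]
  · rw [if_neg hc]
    obtain ⟨x0, hx0⟩ := trace2_nondeg c hc
    have hchr : chr F (c * x0) = -1 := by simp only [chr]; exact if_neg hx0
    have hS : ∑ x : F, chr F (c * x) = ∑ x : F, chr F (c * (x + x0)) :=
      (Fintype.sum_equiv (Equiv.addRight x0) _ _ fun x => rfl).symm
    have h2 : ∀ x : F, chr F (c * (x + x0)) = chr F (c * x) * chr F (c * x0) := by
      intro x; rw [mul_add, chr_add]
    simp only [h2, hchr, mul_neg_one] at hS
    rw [Finset.sum_neg_distrib] at hS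
    linarith [hS]

lemma addzero (x y : F) : x + y = 0 ↔ x = y := by
  rw [← CharTwo.sub_eq_add, sub_eq_zero]

lemma sq_expand (g h : F → F) (c : F) :
    (∑ x : F, chr F (g x + h x * c)) ^ 2
      = ∑ x : F, ∑ y : F, chr F (g x + g y) * chr F ((h x + h y) * c) := by
  rw [sq, Finset.sum_mul_sum]
  refine Finset.sum_congr rfl fun x _ => Finset.sum_congr rfl fun y _ => ?_
  rw [← chr_add, ← chr_add]
  congr 1
  ring

lemma sum_sq_aux (g h : F → F) :
    ∑ c : F, (∑ x : F, chr F (g x + h x * c)) ^ 2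
      = (Fintype.card F : ℤ)
          * ∑ x : F, ∑ y : F, (if h x = h y then chr F (g x + g y) else 0) := by
  simp only [sq_expand g h]
  rw [Finset.sum_comm, Finset.mul_sum]
  refine Finset.sum_congr rfl fun x _ => ?_
  rw [Finset.sum_comm, Finset.mul_sum]
  refine Finset.sum_congr rfl fun y _ => ?_
  rw [← Finset.mul_sum, sum_chr]
  simp only [addzero]
  by_cases h' : h x = h y <;> simp [h', mul_comm]

lemma parseval (f : F → F) (b : F) :
    ∑ a : F, (Walsh f b a) ^ 2 = (Fintype.card F : ℤ) ^ 2 := by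
  have h1 : ∀ a : F, Walsh f b a
      = ∑ x : F, chr F ((fun x => b * f x) x + (fun x : F => x) x * a) := by
    intro a; rw [walsh_def]
    exact Finset.sum_congr rfl fun x _ => by rw [mul_comm a x]
  simp only [h1]
  rw [sum_sq_aux]
  have h2 : ∀ x : F, ∑ y : F,
      (if x = y then chr F (b * f x + b * f y) else 0) = 1 := by
    intro x
    rw [Finset.sum_ite_eq]
    simp [CharTwo.add_self_eq_zero, chr_zero]
  simp only [h2, Finset.sum_const, Finset.card_univ, nsmul_eq_mul, mul_one, sq]

lemma sum_walsh0 (f : F → F) :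
    ∑ b : F, Walsh f b 0 = (Fintype.card F : ℤ) * preCard f 0 := by
  have h1 : ∀ b : F, Walsh f b 0 = ∑ x : F, chr F (f x * b) := by
    intro b; rw [walsh_def]
    refine Finset.sum_congr rfl fun x _ => ?_
    congr 1; ring
  simp only [h1]
  rw [Finset.sum_comm]
  simp only [sum_chr]
  rw [Finset.sum_ite, Finset.sum_const, Finset.sum_const_zero, add_zero,
    nsmul_eq_mul]
  unfold preCard
  push_cast
  ring

lemma sum_walsh0_sq (f : F → F) :
    ∑ b : F, (Walsh f b 0) ^ 2 = (Fintype.card F : ℤ) * NN f := by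
  have h1 : ∀ b : F, Walsh f b 0
      = ∑ x : F, chr F ((fun _ : F => (0:F)) x + (fun x => f x) x * b) := by
    intro b; rw [walsh_def]
    refine Finset.sum_congr rfl fun x _ => ?_
    congr 1; ring
  simp only [h1]
  rw [sum_sq_aux]
  congr 1
  have h2 : ∀ x y : F, (if f x = f y then chr F ((0:F) + 0) else 0)
      = (if f x = f y then (1:ℤ) else 0) := by
    intro x y; simp [chr_zero]
  simp only [h2]
  have h3 : (NN f : ℤ) = ∑ p ∈ (Finset.univ : Finset (F × F)).filter
      (fun p => f p.1 = f p.2), (1:ℤ) := by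
    simp [NN]
  rw [h3, Finset.sum_filter, ← Finset.univ_product_univ, Finset.sum_product]

lemma walsh_fiber (f : F → F) (b : F) :
    Walsh f b 0 = ∑ y ∈ Finset.image f Finset.univ,
      (preCard f y : ℤ) * chr F (b * y) := by
  have h1 : Walsh f b 0 = ∑ x : F, chr F (b * f x) := by
    rw [walsh_def]
    refine Finset.sum_congr rfl fun x _ => ?_
    congr 1; ring
  rw [h1, ← Finset.sum_fiberwise_of_maps_to'
    (fun x _ => Finset.mem_image_of_mem f (Finset.mem_univ x))
    (fun y => chr F (b * y))]
  refine Finset.sum_congr rfl fun y _ => ?_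
  rw [Finset.sum_const, preCard, nsmul_eq_mul]

lemma card_sum (f : F → F) :
    Fintype.card F = ∑ y ∈ Finset.image f Finset.univ, preCard f y := by
  have := Finset.sum_fiberwise_of_maps_to'
    (fun x (_ : x ∈ Finset.univ) => Finset.mem_image_of_mem f (Finset.mem_univ x))
    (fun _ : F => (1:ℕ))
  simp only [Finset.sum_const, smul_eq_mul, mul_one] at this
  rw [← Finset.card_univ, ← this]
  rfl

lemma NN_sum (f : F → F) :
    NN f = ∑ y ∈ Finset.image f Finset.univ, (preCard f y) ^ 2 := by
  have h1 : NN f = ∑ x : F, preCard f (f x) := by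
    rw [NN, Finset.card_filter, ← Finset.univ_product_univ, Finset.sum_product]
    refine Finset.sum_congr rfl fun x _ => ?_
    rw [preCard, Finset.card_filter]
    exact Finset.sum_congr rfl fun y _ => by simp [eq_comm]
  rw [h1, ← Finset.sum_fiberwise_of_maps_to'
    (fun x (_ : x ∈ Finset.univ) => Finset.mem_image_of_mem f (Finset.mem_univ x))
    (fun y => preCard f y)]
  refine Finset.sum_congr rfl fun y _ => ?_
  rw [Finset.sum_const, preCard, smul_eq_mul, sq]

lemma int_sq_pow2 {w : ℤ} {k : ℕ} (h : w ^ 2 = 2 ^ k) :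
    ∃ s : ℕ, k = 2 * s ∧ (w = 2 ^ s ∨ w = -2 ^ s) := by
  have hnat : w.natAbs ^ 2 = 2 ^ k := by
    have := congrArg Int.natAbs h
    simpa [Int.natAbs_pow] using this
  have hdvd : w.natAbs ∣ 2 ^ k := by
    rw [← hnat]; exact dvd_pow_self _ two_ne_zero
  obtain ⟨j, hj, habs⟩ := (Nat.dvd_prime_pow Nat.prime_two).mp hdvd
  have hk2 : 2 ^ (2 * j) = 2 ^ k := by
    rw [two_mul, pow_add, ← sq, ← habs, hnat]
  have hkj : k = 2 * j := (Nat.pow_right_injective (le_refl 2) hk2).symm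
  refine ⟨j, hkj, ?_⟩
  rcases Int.natAbs_eq w with hw | hw
  · left; rw [hw, habs]; push_cast; ring
  · right; rw [hw, habs]; push_cast; ring

lemma pow2_modcycle (r : ℕ) : ∀ j : ℕ, ((2:ℤ) ^ r + 1) ∣ (2:ℤ) ^ (r * j) - (-1) ^ j := by
  intro j
  induction j with
  | zero => simp
  | succ j ih =>
    have key : (2:ℤ) ^ (r * (j+1)) - (-1) ^ (j+1)
        = 2 ^ r * ((2:ℤ) ^ (r * j) - (-1) ^ j) + (-1) ^ j * ((2:ℤ) ^ r + 1) := by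
      rw [Nat.mul_succ, pow_add]; ring
    rw [key]
    exact dvd_add (ih.mul_left _) (dvd_mul_left _ _)

lemma pin {r : ℕ} (hr : 0 < r) {w : ℤ} {s : ℕ} (hw : w = 2 ^ s ∨ w = -2 ^ s)
    (hdvd : ((2:ℤ) ^ r + 1) ∣ w - 1) :
    ∃ q : ℕ, r * q = s ∧ w = (-1) ^ q * 2 ^ (r * q) := by
  set q := s / r with hq
  set u := s % r with hu
  have hqu : r * q + u = s := Nat.div_add_mod s r
  have hult : u < r := Nat.mod_lt _ hr
  have hNpos : (0:ℤ) < 2 ^ r + 1 := by positivity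
  have hcyc := pow2_modcycle r q
  have hsplit : (2:ℤ) ^ s = 2 ^ (r * q) * 2 ^ u := by rw [← pow_add, hqu]
  -- N ∣ 2^s - (-1)^q * 2^u
  have hkey : ((2:ℤ) ^ r + 1) ∣ (2:ℤ) ^ s - (-1) ^ q * 2 ^ u := by
    have := hcyc.mul_right ((2:ℤ) ^ u)
    rwa [sub_mul, ← hsplit] at this
  have hupos : (0:ℤ) < 2 ^ u := by positivity
  have hub : (2:ℤ) ^ u ≤ 2 ^ (r - 1) := by
    apply pow_le_pow_right₀ (by norm_num)
    omega
  have hrb : (2:ℤ) ^ (r-1) * 2 = 2 ^ r := by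
    rw [← pow_succ]
    congr 1
    omega
  have hu0 : ∀ δ : ℤ, (δ = 1 ∨ δ = -1) → ((2:ℤ) ^ r + 1) ∣ δ * 2 ^ u - 1 →
      (δ = 1 ∧ u = 0) := by
    intro δ hδ hd
    rcases hδ with hδ | hδ
    · subst hδ
      rw [one_mul] at hd
      have hz : (2:ℤ) ^ u - 1 = 0 := by
        apply Int.eq_zero_of_abs_lt_dvd hd
        rw [abs_of_nonneg (by linarith)]
        nlinarith
      have hu0 : u = 0 := by
        by_contra hcon
        have h1 : 1 ≤ u := Nat.one_le_iff_ne_zero.mpr hcon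
        have : (2:ℤ) ^ 1 ≤ 2 ^ u := pow_le_pow_right₀ (by norm_num) h1
        simp at this
        linarith
      exact ⟨rfl, hu0⟩
    · subst hδ
      exfalso
      have hd2 : ((2:ℤ) ^ r + 1) ∣ 2 ^ u + 1 := by
        have := hd.neg_right
        have h2 : -(-1 * 2 ^ u - 1) = 2 ^ u + 1 := by ring
        rwa [h2] at this
      have := Int.le_of_dvd (by positivity) hd2
      nlinarith
  -- combine
  rcases hw with hwe | hwe
  · -- w = 2^s
    have hd1 : ((2:ℤ) ^ r + 1) ∣ (-1) ^ q * 2 ^ u - 1 := by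
      have := dvd_sub hdvd hkey
      rw [hwe] at this
      have h2 : (2:ℤ) ^ s - 1 - ((2:ℤ) ^ s - (-1) ^ q * 2 ^ u)
          = (-1) ^ q * 2 ^ u - 1 := by ring
      rwa [h2] at this
    have hor : ((-1:ℤ) ^ q = 1 ∨ (-1:ℤ) ^ q = -1) := neg_one_pow_eq_or _ _
    obtain ⟨hδ1, hu0'⟩ := hu0 _ hor hd1
    refine ⟨q, by omega, ?_⟩
    rw [hwe, hδ1, one_mul]
    congr 1
    omega
  · -- w = -2^s
    have hd1 : ((2:ℤ) ^ r + 1) ∣ (-(-1) ^ q) * 2 ^ u - 1 := by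
      have := dvd_add hdvd hkey
      rw [hwe] at this
      have h2 : -(2:ℤ) ^ s - 1 + ((2:ℤ) ^ s - (-1) ^ q * 2 ^ u)
          = (-(-1) ^ q) * 2 ^ u - 1 := by ring
      rwa [h2] at this
    have hor : ((-(-1:ℤ) ^ q) = 1 ∨ (-(-1:ℤ) ^ q) = -1) := by
      rcases neg_one_pow_eq_or ℤ q with h | h <;> simp [h]
    obtain ⟨hδ1, hu0'⟩ := hu0 _ hor hd1
    have hq1 : (-1:ℤ) ^ q = -1 := by linarith
    refine ⟨q, by omega, ?_⟩
    rw [hwe, hq1]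
    have : r * q = s := by omega
    rw [this]
    ring

end Aux

set_option maxHeartbeats 1000000 in
/-- an almost-`(2^r+1)`-to-1 component-wise plateaued map on `F_{2^n}`,
`n = 2rm`, with `f 0 = 0` and `0` the unique image element with one preimage, has
exactly `(2^r/(2^r+1))(2^n−1)` bent components and `(2^n−1)/(2^r+1)` components of
amplitude `2r`, and `W_f(b,0) ∈ {(−1)^m 2^{rm}, (−1)^{m+1} 2^{r(m+1)}}` for all `b ≠ 0`. -/
theorem plateaued_almost_to_one_walsh {F : Type*} [Field F] [Fintype F] [CharP F 2]
    {n r m : ℕ} (hr : 0 < r) (hm : 0 < m) (hn : n = 2 * r * m)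
    (hcard : Fintype.card F = 2 ^ n) {f : F → F}
    (hplat : ∀ b : F, b ≠ 0 → ∃ t : ℕ, ∀ a : F,
      Walsh f b a = 0 ∨ (Walsh f b a) ^ 2 = 2 ^ (n + t))
    (h0 : f 0 = 0) (hω0 : preCard f 0 = 1)
    (hk : ∀ y ∈ Finset.image f Finset.univ, y ≠ 0 → preCard f y = 2 ^ r + 1) :
    (Finset.univ.filter fun b : F => b ≠ 0 ∧ ∀ a : F, (Walsh f b a) ^ 2 = 2 ^ n).card
        * (2 ^ r + 1) = 2 ^ r * (2 ^ n - 1) ∧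
    (Finset.univ.filter fun b : F => b ≠ 0 ∧ ∀ a : F,
        Walsh f b a = 0 ∨ (Walsh f b a) ^ 2 = 2 ^ (n + 2 * r)).card * (2 ^ r + 1)
      = 2 ^ n - 1 ∧
    ∀ b : F, b ≠ 0 → Walsh f b 0 = (-1 : ℤ) ^ m * 2 ^ (r * m) ∨
      Walsh f b 0 = (-1 : ℤ) ^ (m + 1) * 2 ^ (r * (m + 1)) := by
  set α : ℤ := (-1) ^ m * 2 ^ (r * m) with hα
  set β : ℤ := (-1) ^ (m + 1) * 2 ^ (r * (m + 1)) with hβ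
  have hrm_pos : (0:ℤ) < 2 ^ (r * m) := by positivity
  have hrm1_pos : (0:ℤ) < 2 ^ (r * (m+1)) := by positivity
  have hαabs : α = 2 ^ (r*m) ∨ α = -2 ^ (r*m) := by
    rcases neg_one_pow_eq_or ℤ m with h | h
    · left; rw [hα, h, one_mul]
    · right; rw [hα, h]; ring
  have hβabs : β = 2 ^ (r*(m+1)) ∨ β = -2 ^ (r*(m+1)) := by
    rcases neg_one_pow_eq_or ℤ (m+1) with h | h
    · left; rw [hβ, h, one_mul]
    · right; rw [hβ, h]; ring
  have hα0 : α ≠ 0 := by rcases hαabs with h | h <;> rw [h] <;> intro hc <;> linarith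
  have hβ0 : β ≠ 0 := by rcases hβabs with h | h <;> rw [h] <;> intro hc <;> linarith
  have hmmlt : r * m < r * (m+1) := by
    have := (Nat.mul_lt_mul_left hr).mpr (Nat.lt_succ_self m)
    simpa using this
  have hltpow : (2:ℤ) ^ (r*m) < 2 ^ (r*(m+1)) :=
    pow_lt_pow_right₀ (by norm_num) hmmlt
  have hαβne : α ≠ β := by
    rcases hαabs with h1 | h1 <;> rcases hβabs with h2 | h2 <;>
      rw [h1, h2] <;> intro hc <;> linarith
  have himg0 : (0:F) ∈ Finset.image f Finset.univ :=
    Finset.mem_image.2 ⟨0, Finset.mem_univ 0, h0⟩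
  set K := ((Finset.image f Finset.univ).erase 0).card with hK
  have hcard1 : Fintype.card F = 1 + (2 ^ r + 1) * K := by
    rw [card_sum f, ← Finset.add_sum_erase _ _ himg0, hω0]
    congr 1
    rw [Finset.sum_congr rfl (fun y hy =>
      hk y (Finset.mem_of_mem_erase hy) (Finset.ne_of_mem_erase hy)),
      Finset.sum_const, smul_eq_mul]
    ring
  have hNN1 : NN f = 1 + (2 ^ r + 1) ^ 2 * K := by
    rw [NN_sum f, ← Finset.add_sum_erase _ _ himg0, hω0]
    rw [Finset.sum_congr rfl (fun y hy => by
      rw [hk y (Finset.mem_of_mem_erase hy) (Finset.ne_of_mem_erase hy)]),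
      Finset.sum_const, smul_eq_mul]
    ring
  have hcz : (Fintype.card F : ℤ) = 2 ^ n := by exact_mod_cast hcard
  have hKz : ((2:ℤ) ^ r + 1) * (K:ℤ) = 2 ^ n - 1 := by
    have h1 : (2:ℕ) ^ n = 1 + (2 ^ r + 1) * K := by rw [← hcard, hcard1]
    have h2 : ((2:ℤ)) ^ n = 1 + ((2:ℤ) ^ r + 1) * K := by exact_mod_cast h1
    linarith
  set E := (Finset.univ : Finset F).erase 0 with hE
  have hW00 : Walsh f 0 0 = (Fintype.card F : ℤ) := by
    rw [walsh_def]
    simp [chr_zero, Finset.card_univ]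
  have hsumE : ∑ b ∈ E, Walsh f b 0 = 0 := by
    have htot := sum_walsh0 f
    rw [← Finset.add_sum_erase _ _ (Finset.mem_univ (0:F)), hW00, hω0] at htot
    rw [← hE] at htot
    push_cast at htot
    linarith
  have hsumsqE : ∑ b ∈ E, (Walsh f b 0) ^ 2 = 2 ^ (n+r) * (2 ^ n - 1) := by
    have htot := sum_walsh0_sq f
    rw [← Finset.add_sum_erase _ _ (Finset.mem_univ (0:F)), hW00, ← hE] at htot
    have hNz : (NN f : ℤ) = 1 + ((2:ℤ) ^ r + 1) ^ 2 * K := by exact_mod_cast hNN1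
    rw [hcz, hNz] at htot
    linear_combination htot + ((2:ℤ) ^ n * ((2:ℤ) ^ r + 1)) * hKz
  have hmod : ∀ b : F, ((2:ℤ) ^ r + 1) ∣ Walsh f b 0 - 1 := by
    intro b
    rw [walsh_fiber f b, ← Finset.add_sum_erase _ _ himg0, hω0, mul_zero,
      chr_zero, Nat.cast_one, one_mul, add_sub_cancel_left]
    apply Finset.dvd_sum
    intro y hy
    rw [hk y (Finset.mem_of_mem_erase hy) (Finset.ne_of_mem_erase hy)]
    push_cast
    exact dvd_mul_right _ _
  have hne : ∀ b : F, Walsh f b 0 ≠ 0 := by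
    intro b hzero
    have h1 := hmod b
    rw [hzero, zero_sub] at h1
    have h2 : ((2:ℤ) ^ r + 1) ∣ 1 := (dvd_neg.mp h1)
    have h3 := Int.le_of_dvd one_pos h2
    have h4 : (2:ℤ) ^ 1 ≤ 2 ^ r := pow_le_pow_right₀ (by norm_num) hr
    simp at h4
    linarith
  have hval : ∀ b : F, b ≠ 0 → ∃ q : ℕ, m ≤ q ∧ Walsh f b 0 = (-1) ^ q * 2 ^ (r*q) := by
    intro b hb
    obtain ⟨t, ht⟩ := hplat b hb
    rcases ht 0 with h | h
    · exact absurd h (hne b)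
    · obtain ⟨s, hs, hw⟩ := int_sq_pow2 h
      obtain ⟨q, hrq, hwq⟩ := pin hr hw (hmod b)
      refine ⟨q, ?_, hwq⟩
      have h1 : r * m ≤ r * q := by nlinarith [hs, hrq, hn]
      exact Nat.le_of_mul_le_mul_left h1 hr
  have hTnonneg : ∀ b ∈ E, (0:ℤ) ≤ (Walsh f b 0 - α) * (Walsh f b 0 - β) := by
    intro b hb
    obtain ⟨q, hq, hwq⟩ := hval b (Finset.ne_of_mem_erase hb)
    rcases eq_or_lt_of_le hq with he | hlt
    · have hWα : Walsh f b 0 = α := by rw [hwq, ← he, hα]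
      rw [hWα]
      simp
    · rcases eq_or_lt_of_le (Nat.succ_le_of_lt hlt) with he2 | hlt2
      · have hWβ : Walsh f b 0 = β := by rw [hwq, ← he2, hβ]
        rw [hWβ]
        simp
      · have hq1 : r * m ≤ r * q := Nat.mul_le_mul_left r hq
        have hq2 : r * (m+1) ≤ r * q := Nat.mul_le_mul_left r (le_of_lt hlt2)
        have b1 : (2:ℤ) ^ (r*m) ≤ 2 ^ (r*q) := pow_le_pow_right₀ (by norm_num) hq1
        have b2 : (2:ℤ) ^ (r*(m+1)) ≤ 2 ^ (r*q) := pow_le_pow_right₀ (by norm_num) hq2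
        have hqpos : (0:ℤ) < 2 ^ (r*q) := by positivity
        rcases neg_one_pow_eq_or ℤ q with hev | hod
        · have hw : Walsh f b 0 = 2 ^ (r*q) := by rw [hwq, hev, one_mul]
          apply mul_nonneg
          · rw [hw]
            rcases hαabs with h | h <;> rw [h] <;> linarith
          · rw [hw]
            rcases hβabs with h | h <;> rw [h] <;> linarith
        · have hw : Walsh f b 0 = -2 ^ (r*q) := by rw [hwq, hod]; ring
          have h1 : Walsh f b 0 - α ≤ 0 := by
            rw [hw]; rcases hαabs with h | h <;> rw [h] <;> linarith
          have h2 : Walsh f b 0 - β ≤ 0 := by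
            rw [hw]; rcases hβabs with h | h <;> rw [h] <;> linarith
          have h3 := mul_nonneg (neg_nonneg.2 h1) (neg_nonneg.2 h2)
          rwa [neg_mul_neg] at h3
  have hEcard : (E.card : ℤ) = 2 ^ n - 1 := by
    rw [hE, Finset.card_erase_of_mem (Finset.mem_univ 0), Finset.card_univ, hcard,
      Nat.cast_sub Nat.one_le_two_pow]
    push_cast
    ring
  have hab : α * β = -2 ^ (n+r) := by
    have e1 : r*m + r*(m+1) = n + r := by rw [hn]; ring
    have h2 : ((-1:ℤ)) ^ (m+1) = -(-1:ℤ) ^ m := by rw [pow_succ]; ring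
    rw [hα, hβ, h2, ← e1, pow_add]
    rcases neg_one_pow_eq_or ℤ m with h | h <;> rw [h] <;> ring
  have hTsum : ∑ b ∈ E, (Walsh f b 0 - α) * (Walsh f b 0 - β) = 0 := by
    have hexpand : ∀ b : F, (Walsh f b 0 - α) * (Walsh f b 0 - β)
        = (Walsh f b 0) ^ 2 - (α + β) * Walsh f b 0 + α * β := fun b => by ring
    rw [Finset.sum_congr rfl fun b _ => hexpand b, Finset.sum_add_distrib,
      Finset.sum_sub_distrib, ← Finset.mul_sum, Finset.sum_const, hsumE, hsumsqE,
      mul_zero, sub_zero, nsmul_eq_mul, hEcard, hab]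
    ring
  have hzero_each := (Finset.sum_eq_zero_iff_of_nonneg hTnonneg).mp hTsum
  have hαβ : ∀ b : F, b ≠ 0 → Walsh f b 0 = α ∨ Walsh f b 0 = β := by
    intro b hb
    have hbE : b ∈ E := Finset.mem_erase.2 ⟨hb, Finset.mem_univ b⟩
    rcases mul_eq_zero.mp (hzero_each b hbE) with h | h
    · exact Or.inl (sub_eq_zero.mp h)
    · exact Or.inr (sub_eq_zero.mp h)
  have hαsq : α ^ 2 = 2 ^ n := by
    rw [hα, mul_pow]
    have h1 : ((-1:ℤ) ^ m) ^ 2 = 1 := by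
      rcases neg_one_pow_eq_or ℤ m with h | h <;> rw [h] <;> ring
    rw [h1, one_mul, ← pow_mul]
    congr 1
    rw [hn]; ring
  have hβsq : β ^ 2 = 2 ^ (n + 2*r) := by
    rw [hβ, mul_pow]
    have h1 : ((-1:ℤ) ^ (m+1)) ^ 2 = 1 := by
      rcases neg_one_pow_eq_or ℤ (m+1) with h | h <;> rw [h] <;> ring
    rw [h1, one_mul, ← pow_mul]
    congr 1
    rw [hn]; ring
  have hpowinj : ∀ {i j : ℕ}, (2:ℤ) ^ i = 2 ^ j → i = j := by
    intro i j h
    exact Nat.pow_right_injective (le_refl 2) (by exact_mod_cast h)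
  have hbent : ∀ b : F, b ≠ 0 → Walsh f b 0 = α → ∀ a : F, (Walsh f b a) ^ 2 = 2 ^ n := by
    intro b hb hWα
    obtain ⟨t, ht⟩ := hplat b hb
    have h0t : (Walsh f b 0) ^ 2 = 2 ^ (n+t) := (ht 0).resolve_left (hne b)
    have ht0 : t = 0 := by
      have h1 : (2:ℤ) ^ n = 2 ^ (n+t) := by rw [← hαsq, ← hWα, h0t]
      have := hpowinj h1
      omega
    subst ht0
    intro a
    rcases ht a with hz | hsq
    · exfalso
      have hpars := parseval f b
      rw [hcz] at hpars
      have hbound : ∑ a' ∈ Finset.univ.erase a, (Walsh f b a') ^ 2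
          ≤ (Finset.univ.erase a).card • (2:ℤ) ^ n := by
        apply Finset.sum_le_card_nsmul
        intro a' _
        rcases ht a' with h | h
        · rw [h]; positivity
        · rw [h, add_zero]
      rw [← Finset.add_sum_erase _ _ (Finset.mem_univ a), hz] at hpars
      have hc1 : ((Finset.univ.erase a).card : ℤ) = 2 ^ n - 1 := by
        rw [Finset.card_erase_of_mem (Finset.mem_univ a), Finset.card_univ, hcard,
          Nat.cast_sub Nat.one_le_two_pow]
        push_cast
        ring
      rw [nsmul_eq_mul, hc1] at hbound
      have hp : (0:ℤ) < 2 ^ n := by positivity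
      nlinarith [hbound, hpars]
    · rw [hsq, add_zero]
  have hamp : ∀ b : F, b ≠ 0 → Walsh f b 0 = β →
      ∀ a : F, Walsh f b a = 0 ∨ (Walsh f b a) ^ 2 = 2 ^ (n + 2*r) := by
    intro b hb hWβ
    obtain ⟨t, ht⟩ := hplat b hb
    have h0t : (Walsh f b 0) ^ 2 = 2 ^ (n+t) := (ht 0).resolve_left (hne b)
    have ht2 : t = 2*r := by
      have h1 : (2:ℤ) ^ (n+2*r) = 2 ^ (n+t) := by rw [← hβsq, ← hWβ, h0t]
      have := hpowinj h1
      omega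
    intro a
    rcases ht a with h | h
    · exact Or.inl h
    · right
      rw [h]
      congr 1
      omega
  have hG1 : (Finset.univ.filter fun b : F => b ≠ 0 ∧ ∀ a : F,
      (Walsh f b a) ^ 2 = 2 ^ n) = E.filter (fun b => Walsh f b 0 = α) := by
    ext b
    simp only [Finset.mem_filter, Finset.mem_univ, true_and, hE, Finset.mem_erase]
    constructor
    · rintro ⟨hb, hall⟩
      refine ⟨⟨hb, trivial⟩, ?_⟩
      rcases hαβ b hb with h | h
      · exact h
      · exfalso
        have h1 := hall 0
        rw [h, hβsq] at h1
        have := hpowinj h1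
        omega
    · rintro ⟨⟨hb, _⟩, hW⟩
      exact ⟨hb, hbent b hb hW⟩
  have hG2 : (Finset.univ.filter fun b : F => b ≠ 0 ∧ ∀ a : F,
      Walsh f b a = 0 ∨ (Walsh f b a) ^ 2 = 2 ^ (n + 2*r))
      = E.filter (fun b => Walsh f b 0 = β) := by
    ext b
    simp only [Finset.mem_filter, Finset.mem_univ, true_and, hE, Finset.mem_erase]
    constructor
    · rintro ⟨hb, hall⟩
      refine ⟨⟨hb, trivial⟩, ?_⟩
      rcases hαβ b hb with h | h
      · exfalso
        have h1 := (hall 0).resolve_left (hne b)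
        rw [h, hαsq] at h1
        have := hpowinj h1
        omega
      · exact h
    · rintro ⟨⟨hb, _⟩, hW⟩
      exact ⟨hb, hamp b hb hW⟩
  set c1 := (E.filter (fun b => Walsh f b 0 = α)).card with hc1
  set c2 := (E.filter (fun b => Walsh f b 0 = β)).card with hc2
  have hfilters : E.filter (fun b => ¬ (Walsh f b 0 = α))
      = E.filter (fun b => Walsh f b 0 = β) := by
    apply Finset.filter_congr
    intro b hbE
    have hb := Finset.ne_of_mem_erase hbE
    constructor
    · intro hne'
      exact (hαβ b hb).resolve_left hne'
    · intro hWβ hWα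
      exact hαβne (hWα.symm.trans hWβ)
  have hcards : c1 + c2 = E.card := by
    have h1 := Finset.card_filter_add_card_filter_not
      (s := E) (p := fun b => Walsh f b 0 = α)
    rw [hfilters] at h1
    exact h1
  have hsumsplit : (c1:ℤ) * α + (c2:ℤ) * β = 0 := by
    have h1 := Finset.sum_filter_add_sum_filter_not E
      (fun b => Walsh f b 0 = α) (fun b => Walsh f b 0)
    rw [hfilters] at h1
    have h2 : ∑ b ∈ E.filter (fun b => Walsh f b 0 = α), Walsh f b 0 = (c1:ℤ) * α := by
      rw [Finset.sum_congr rfl (fun b hb => (Finset.mem_filter.mp hb).2),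
        Finset.sum_const, nsmul_eq_mul]
    have h3 : ∑ b ∈ E.filter (fun b => Walsh f b 0 = β), Walsh f b 0 = (c2:ℤ) * β := by
      rw [Finset.sum_congr rfl (fun b hb => (Finset.mem_filter.mp hb).2),
        Finset.sum_const, nsmul_eq_mul]
    rw [h2, h3, hsumE] at h1
    exact h1
  have hc1c2 : (c1:ℤ) = 2 ^ r * (c2:ℤ) := by
    have hβα : β = -(2 ^ r * α) := by
      rw [hα, hβ, pow_succ, Nat.mul_succ, pow_add]
      ring
    rw [hβα] at hsumsplit
    have hfac : α * ((c1:ℤ) - 2 ^ r * c2) = 0 := by linear_combination hsumsplit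
    have h1 := (mul_eq_zero.mp hfac).resolve_left hα0
    linarith
  have hc1c2n : c1 = 2 ^ r * c2 := by exact_mod_cast hc1c2
  have hEcardn : E.card = 2 ^ n - 1 := by
    rw [hE, Finset.card_erase_of_mem (Finset.mem_univ 0), Finset.card_univ, hcard]
  refine ⟨?_, ?_, ?_⟩
  · rw [hG1, ← hc1, ← hEcardn, ← hcards, hc1c2n]
    ring
  · rw [hG2, ← hc2, ← hEcardn, ← hcards, hc1c2n]
    ring
  · intro b hb
    exact hαβ b hb
end
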